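/- arXiv:1901.03303 — 2 statements merged into one kernel-verified Lean document; each statement's English description precedes it below -/
import Mathlib

section
/- Let ρ₁, ρ₂, k₁, k₂ be positive real constants with k₁/ρ₁ ≠ k₂/ρ₂, satisfying condition (A₁), and such that k₁ρ₂/(k₂ρ₁) = p₀²/q₀² for some positive integers p₀, q₀ (so that k₁ρ₂/(k₂ρ₁) ≠ 1). For each positive integer n let μ_{1,n} and μ_{2,n} be defined by the different-speed formulas. Then there exist c₁ > 0 and N₀ ∈ ℕ such that for all integers m, n ≥ N₀ one has |μ_{1,m} − μ_{2,n}| ≥ c₁/m and |μ_{1,m} − μ_{2,n}| ≥ c₁/n; moreover, there exists c₂ > 0 such that for every N ∈ ℕ there exist integers m, n ≥ N with |μ_{1,m} − μ_{2,n}| ≤ c₂/m and |μ_{1,m} − μ_{2,n}| ≤ c₂/n. -/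
/-- Condition (A₁) of the paper. -/
def condA1 (ρ₁ ρ₂ k₁ k₂ : ℝ) : Prop :=
  ∀ m₁ m₂ : ℤ, (m₁, m₂) ≠ (0, 0) →
    k₁ / ρ₂ ≠
      ((k₂ * (m₁ : ℝ) ^ 2 / ρ₂ - k₁ * (m₂ : ℝ) ^ 2 / ρ₁) *
          (k₁ * (m₁ : ℝ) ^ 2 / ρ₁ - k₂ * (m₂ : ℝ) ^ 2 / ρ₂) * Real.pi ^ 2) /
        ((k₁ / ρ₁ + k₂ / ρ₂) * ((m₁ : ℝ) ^ 2 + (m₂ : ℝ) ^ 2))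

/-- Different-speed eigenfrequency, first branch. -/
noncomputable def mu1df (ρ₁ ρ₂ k₁ k₂ : ℝ) (n : ℕ) : ℝ :=
  Real.sqrt (((k₁ / ρ₁ + k₂ / ρ₂) * ((n : ℝ) * Real.pi) ^ 2 + k₁ / ρ₂) / 2
    + ((k₁ / ρ₁ - k₂ / ρ₂) / 2) * Real.sqrt (((n : ℝ) * Real.pi) ^ 4
      + (2 * (k₁ / ρ₁ + k₂ / ρ₂) * (k₁ / ρ₂) * ((n : ℝ) * Real.pi) ^ 2 + (k₁ / ρ₂) ^ 2)
        / (k₁ / ρ₁ - k₂ / ρ₂) ^ 2))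

/-- Different-speed eigenfrequency, second branch. -/
noncomputable def mu2df (ρ₁ ρ₂ k₁ k₂ : ℝ) (n : ℕ) : ℝ :=
  Real.sqrt (((k₁ / ρ₁ + k₂ / ρ₂) * ((n : ℝ) * Real.pi) ^ 2 + k₁ / ρ₂) / 2
    - ((k₁ / ρ₁ - k₂ / ρ₂) / 2) * Real.sqrt (((n : ℝ) * Real.pi) ^ 4
      + (2 * (k₁ / ρ₁ + k₂ / ρ₂) * (k₁ / ρ₂) * ((n : ℝ) * Real.pi) ^ 2 + (k₁ / ρ₂) ^ 2)
        / (k₁ / ρ₁ - k₂ / ρ₂) ^ 2))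

noncomputable def muE (a b c x : ℝ) : ℝ :=
  Real.sqrt (((a+b)*x + c)/2 + ((a-b)/2) *
    Real.sqrt (x^2 + (2*(a+b)*c*x + c^2)/(a-b)^2))

noncomputable def muF (a b c x : ℝ) : ℝ :=
  Real.sqrt (((a+b)*x + c)/2 - ((a-b)/2) *
    Real.sqrt (x^2 + (2*(a+b)*c*x + c^2)/(a-b)^2))

lemma muE_swap (a b c x : ℝ) : muE a b c x = muF b a c x := by
  unfold muE muF
  have h : x^2 + (2*(a+b)*c*x + c^2)/(a-b)^2 = x^2 + (2*(b+a)*c*x + c^2)/(b-a)^2 := by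
    rw [show (a-b)^2 = (b-a)^2 by ring]; ring_nf
  rw [h]; congr 1; ring

lemma muF_swap (a b c x : ℝ) : muF a b c x = muE b a c x := by
  rw [muE_swap]

lemma mu1df_eq (ρ₁ ρ₂ k₁ k₂ : ℝ) (n : ℕ) :
    mu1df ρ₁ ρ₂ k₁ k₂ n = muE (k₁/ρ₁) (k₂/ρ₂) (k₁/ρ₂) (((n:ℝ)*Real.pi)^2) := by
  unfold mu1df muE
  rw [show ((n:ℝ)*Real.pi)^4 = (((n:ℝ)*Real.pi)^2)^2 by ring]

lemma mu2df_eq (ρ₁ ρ₂ k₁ k₂ : ℝ) (n : ℕ) :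
    mu2df ρ₁ ρ₂ k₁ k₂ n = muF (k₁/ρ₁) (k₂/ρ₂) (k₁/ρ₂) (((n:ℝ)*Real.pi)^2) := by
  unfold mu2df muF
  rw [show ((n:ℝ)*Real.pi)^4 = (((n:ℝ)*Real.pi)^2)^2 by ring]

/-- main algebraic estimate for the sqrt arguments -/
lemma arg_close (a b c x : ℝ) (hb : 0 < b) (hab : b < a) (hc : 0 < c) (hx : 1 ≤ x) :
    |(((a+b)*x + c)/2 + ((a-b)/2) *
      Real.sqrt (x^2 + (2*(a+b)*c*x + c^2)/(a-b)^2) - (a*x + c*a/(a-b)))|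
      ≤ (2*a*b*c^2/(a-b)^3)/x ∧
    |(((a+b)*x + c)/2 - ((a-b)/2) *
      Real.sqrt (x^2 + (2*(a+b)*c*x + c^2)/(a-b)^2) - (b*x + -(c*b)/(a-b)))|
      ≤ (2*a*b*c^2/(a-b)^3)/x := by
  have hs : 0 < a - b := by linarith
  have hx0 : 0 < x := by linarith
  have ha : 0 < a := lt_trans hb hab
  obtain ⟨Y, hYdef⟩ : ∃ Y : ℝ, Y = (a-b)^2*x^2 + 2*(a+b)*c*x + c^2 := ⟨_, rfl⟩
  have hY : 0 ≤ Y := by rw [hYdef]; positivity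
  have hinner : x^2 + (2*(a+b)*c*x + c^2)/(a-b)^2 = Y/(a-b)^2 := by
    rw [hYdef]; field_simp; ring
  have hrw : Real.sqrt (x^2 + (2*(a+b)*c*x + c^2)/(a-b)^2) = Real.sqrt Y / (a-b) := by
    rw [hinner, Real.sqrt_div hY, Real.sqrt_sq hs.le]
  obtain ⟨t, htdef⟩ : ∃ t : ℝ, t = (a-b)*x + (a+b)*c/(a-b) := ⟨_, rfl⟩
  have hdivnn : 0 ≤ (a+b)*c/(a-b) := div_nonneg (by positivity) hs.le
  have h2 : (a-b)*x ≤ t := by rw [htdef]; linarith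
  have ht : 0 < t := lt_of_lt_of_le (by positivity) h2
  have htY : t^2 - Y = 4*a*b*c^2/(a-b)^2 := by
    rw [htdef, hYdef]; field_simp; ring
  have h4nn : (0:ℝ) ≤ 4*a*b*c^2/(a-b)^2 := by positivity
  have hle : Real.sqrt Y ≤ t := by
    rw [show t = Real.sqrt (t^2) by rw [Real.sqrt_sq ht.le]]
    apply Real.sqrt_le_sqrt; linarith
  have hsY := Real.sq_sqrt hY
  have hsYnn := Real.sqrt_nonneg Y
  have h1 : 0 ≤ t - Real.sqrt Y := by linarith
  have h3 : 0 ≤ (t - Real.sqrt Y) * (a-b)^2 := mul_nonneg h1 (by positivity)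
  have h4 : (a-b)*x ≤ t + Real.sqrt Y := by linarith
  have h5 : (t - Real.sqrt Y)*(a-b)^2*((a-b)*x) ≤ (t - Real.sqrt Y)*(a-b)^2*(t + Real.sqrt Y) :=
    mul_le_mul_of_nonneg_left h4 h3
  have hId : (t - Real.sqrt Y)*(a-b)^2*(t + Real.sqrt Y) = 4*a*b*c^2 := by
    have h6 : (t - Real.sqrt Y)*(a-b)^2*(t + Real.sqrt Y) = (t^2 - Real.sqrt Y^2)*(a-b)^2 := by
      ring
    rw [h6, hsY, htY]; field_simp
  have hkey : (t - Real.sqrt Y)/2 ≤ (2*a*b*c^2/(a-b)^3)/x := by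
    rw [div_le_div_iff₀ (by norm_num : (0:ℝ) < 2) hx0,
      show 2*a*b*c^2/(a-b)^3*2 = 4*a*b*c^2/(a-b)^3 by ring,
      le_div_iff₀ (pow_pos hs 3)]
    nlinarith [h5, hId]
  constructor
  · have hEeq : ((a+b)*x + c)/2 + ((a-b)/2) * (Real.sqrt Y/(a-b)) - (a*x + c*a/(a-b))
        = (Real.sqrt Y - t)/2 := by
      rw [htdef]; field_simp; ring
    rw [hrw, hEeq, abs_of_nonpos (by linarith)]
    linarith
  · have hFeq : ((a+b)*x + c)/2 - ((a-b)/2) * (Real.sqrt Y/(a-b)) - (b*x + -(c*b)/(a-b))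
        = (t - Real.sqrt Y)/2 := by
      rw [htdef]; field_simp; ring
    rw [hrw, hFeq, abs_of_nonneg (by linarith)]
    linarith

/-- From closeness of squares, closeness of square roots. -/
lemma branch_est (s A' K₁ y u : ℝ) (hs : 0 < s) (hy : 1 ≤ y) (hu : 0 ≤ u)
    (hK : 0 ≤ K₁) (harg : |u^2 - (s^2*y^2 + A')| ≤ K₁/y^2) (hA : |A'| ≤ s^2*y^2) :
    |u - (s*y + A'/(2*(s*y)))| ≤ 2*(K₁ + A'^2/(4*s^2))/(s*y^3) := by
  have hy0 : 0 < y := by linarith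
  have hsy : 0 < s*y := by positivity
  have hAle := abs_le.mp hA
  obtain ⟨g, hg⟩ : ∃ g : ℝ, g = s*y + A'/(2*(s*y)) := ⟨_, rfl⟩
  rw [← hg]
  have hg2 : g^2 = s^2*y^2 + A' + A'^2/(4*s^2*y^2) := by rw [hg]; field_simp; ring
  have hgpos : s*y/2 ≤ g := by
    have h2 : -(s*y/2) ≤ A'/(2*(s*y)) := by
      rw [neg_le, ← neg_div, div_le_iff₀ (by positivity : (0:ℝ) < 2*(s*y))]
      nlinarith [hAle.1]
    rw [hg]; linarith
  have hsum : s*y/2 ≤ u + g := by linarith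
  have hsumpos : 0 < u + g := by linarith [hsy]
  have hdiff : u - g = (u^2 - g^2)/(u+g) := by field_simp [hsumpos.ne']; ring
  have e1 : u^2 - g^2 = (u^2 - (s^2*y^2 + A')) - A'^2/(4*s^2*y^2) := by rw [hg2]; ring
  have e2 : |u^2 - g^2| ≤ K₁/y^2 + A'^2/(4*s^2*y^2) := by
    rw [e1]
    refine (abs_sub _ _).trans ?_
    rw [abs_of_nonneg (by positivity : (0:ℝ) ≤ A'^2/(4*s^2*y^2))]
    linarith [harg]
  have e3 : |u - g| = |u^2 - g^2|/(u+g) := by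
    rw [hdiff, abs_div, abs_of_pos hsumpos]
  have e4 : |u^2 - g^2|/(u+g) ≤ (K₁/y^2 + A'^2/(4*s^2*y^2))/(s*y/2) :=
    div_le_div₀ (by positivity) e2 (by positivity) hsum
  have e5 : (K₁/y^2 + A'^2/(4*s^2*y^2))/(s*y/2) = 2*(K₁ + A'^2/(4*s^2))/(s*y^3) := by
    field_simp
  rw [e3]; rw [e5] at e4; exact e4

set_option maxHeartbeats 1000000 in
lemma mu_close (a b c : ℝ) (hb : 0 < b) (hab : b < a) (hc : 0 < c) :
    ∃ K : ℝ, 0 < K ∧ ∃ N : ℕ, 1 ≤ N ∧ ∀ n : ℕ, N ≤ n →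
      |muE a b c (((n:ℝ)*Real.pi)^2) - (Real.sqrt a * ((n:ℝ)*Real.pi)
          + (c*a/(a-b))/(2*(Real.sqrt a * ((n:ℝ)*Real.pi))))| ≤ K/(n:ℝ)^2 ∧
      |muF a b c (((n:ℝ)*Real.pi)^2) - (Real.sqrt b * ((n:ℝ)*Real.pi)
          + (-(c*b)/(a-b))/(2*(Real.sqrt b * ((n:ℝ)*Real.pi))))| ≤ K/(n:ℝ)^2 := by
  have ha : 0 < a := hb.trans hab
  have hs : 0 < a - b := by linarith
  have hsa : Real.sqrt a ^ 2 = a := Real.sq_sqrt ha.le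
  have hsb : Real.sqrt b ^ 2 = b := Real.sq_sqrt hb.le
  have hsa0 : 0 < Real.sqrt a := Real.sqrt_pos.mpr ha
  have hsb0 : 0 < Real.sqrt b := Real.sqrt_pos.mpr hb
  obtain ⟨A, hA⟩ : ∃ A : ℝ, A = c*a/(a-b) := ⟨_, rfl⟩
  obtain ⟨B, hB⟩ : ∃ B : ℝ, B = -(c*b)/(a-b) := ⟨_, rfl⟩
  obtain ⟨K₁, hK₁⟩ : ∃ K₁ : ℝ, K₁ = 2*a*b*c^2/(a-b)^3 := ⟨_, rfl⟩
  have hK₁0 : 0 < K₁ := by rw [hK₁]; positivity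
  obtain ⟨R, hR⟩ : ∃ R : ℝ, R = (|A| + |B| + K₁ + 1)/b := ⟨_, rfl⟩
  have hbR : b*R = |A| + |B| + K₁ + 1 := by rw [hR]; field_simp
  obtain ⟨KE, hKE⟩ : ∃ KE : ℝ, KE = 2*(K₁ + A^2/(4*a))/Real.sqrt a := ⟨_, rfl⟩
  obtain ⟨KF, hKF⟩ : ∃ KF : ℝ, KF = 2*(K₁ + B^2/(4*b))/Real.sqrt b := ⟨_, rfl⟩
  have hKE0 : 0 < KE := by rw [hKE]; positivity
  have hKF0 : 0 < KF := by rw [hKF]; positivity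
  refine ⟨max KE KF, lt_max_of_lt_left hKE0, ?_⟩
  obtain ⟨N₀, hN₀⟩ := exists_nat_ge (max R 1)
  refine ⟨max N₀ 1, le_max_right _ _, ?_⟩
  intro n hn
  have hn1 : (1:ℝ) ≤ (n:ℝ) := by
    have := le_trans (le_max_right N₀ 1) hn
    exact_mod_cast this
  have hn0 : (0:ℝ) < (n:ℝ) := by linarith
  have hn2 : (0:ℝ) < (n:ℝ)^2 := by positivity
  have hnR : R ≤ (n:ℝ) := by
    have h1 : (N₀ : ℝ) ≤ (n:ℝ) := by exact_mod_cast le_trans (le_max_left N₀ 1) hn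
    exact le_trans (le_trans (le_max_left R 1) hN₀) h1
  obtain ⟨y, hy⟩ : ∃ y : ℝ, y = (n:ℝ)*Real.pi := ⟨_, rfl⟩
  have hpi : (1:ℝ) ≤ Real.pi := by linarith [Real.pi_gt_three]
  have hny : (n:ℝ) ≤ y := by rw [hy]; exact le_mul_of_one_le_right hn0.le hpi
  have hy1 : 1 ≤ y := le_trans hn1 hny
  have hy0 : 0 < y := by linarith
  have hx1 : 1 ≤ y^2 := by nlinarith [hy1]
  have hxn : (n:ℝ)^2 ≤ y^2 := pow_le_pow_left₀ hn0.le hny 2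
  have hxR : R ≤ y^2 := hnR.trans ((le_self_pow₀ hn1 two_ne_zero).trans hxn)
  have hy3 : (n:ℝ)^2 ≤ y^3 :=
    hxn.trans (by calc y^2 ≤ y^2*y := le_mul_of_one_le_right (by positivity) hy1
                      _ = y^3 := by ring)
  have harg := arg_close a b c (y^2) hb hab hc hx1
  rw [← hA, ← hB, ← hK₁] at harg
  have hK₁x : K₁/y^2 ≤ K₁ := div_le_self hK₁0.le hx1
  have hAabs : |A| ≤ b*R := by rw [hbR]; linarith [abs_nonneg A, abs_nonneg B]
  have hBabs : |B| ≤ b*R := by rw [hbR]; linarith [abs_nonneg A, abs_nonneg B]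
  have hK₁R : K₁ ≤ b*R := by rw [hbR]; linarith [abs_nonneg A, abs_nonneg B]
  have hbxR : b*R ≤ b*y^2 := by nlinarith
  have haxb : b*y^2 ≤ a*y^2 := by nlinarith
  have hargE0 : 0 ≤ ((a+b)*(y^2) + c)/2 + ((a-b)/2) *
      Real.sqrt ((y^2)^2 + (2*(a+b)*c*(y^2) + c^2)/(a-b)^2) := by
    have h1 := (abs_le.mp harg.1).1
    linarith [neg_abs_le A, hK₁x, hbxR, haxb, hK₁R, hAabs, hbR, abs_nonneg B]
  have hargF0 : 0 ≤ ((a+b)*(y^2) + c)/2 - ((a-b)/2) *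
      Real.sqrt ((y^2)^2 + (2*(a+b)*c*(y^2) + c^2)/(a-b)^2) := by
    have h1 := (abs_le.mp harg.2).1
    linarith [neg_abs_le B, hK₁x, hbxR, hK₁R, hBabs, hbR, abs_nonneg A]
  have huE2 : muE a b c (y^2) ^ 2 = ((a+b)*(y^2) + c)/2 + ((a-b)/2) *
      Real.sqrt ((y^2)^2 + (2*(a+b)*c*(y^2) + c^2)/(a-b)^2) := by
    unfold muE; exact Real.sq_sqrt hargE0
  have huF2 : muF a b c (y^2) ^ 2 = ((a+b)*(y^2) + c)/2 - ((a-b)/2) *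
      Real.sqrt ((y^2)^2 + (2*(a+b)*c*(y^2) + c^2)/(a-b)^2) := by
    unfold muF; exact Real.sq_sqrt hargF0
  have hE : |muE a b c (y^2) ^ 2 - (Real.sqrt a^2 * y^2 + A)| ≤ K₁/y^2 := by
    rw [huE2, hsa]; exact harg.1
  have hF : |muF a b c (y^2) ^ 2 - (Real.sqrt b^2 * y^2 + B)| ≤ K₁/y^2 := by
    rw [huF2, hsb]; exact harg.2
  have hbE := branch_est (Real.sqrt a) A K₁ y (muE a b c (y^2)) hsa0 hy1
    (Real.sqrt_nonneg _) hK₁0.le hE (by rw [hsa]; linarith [hAabs, hbxR, haxb])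
  have hbF := branch_est (Real.sqrt b) B K₁ y (muF a b c (y^2)) hsb0 hy1
    (Real.sqrt_nonneg _) hK₁0.le hF (by rw [hsb]; linarith [hBabs, hbxR, haxb])
  constructor
  · rw [← hy, ← hA]
    refine hbE.trans ?_
    have e1 : 2*(K₁ + A^2/(4*Real.sqrt a^2))/(Real.sqrt a * y^3)
        ≤ 2*(K₁ + A^2/(4*Real.sqrt a^2))/(Real.sqrt a * (n:ℝ)^2) := by
      apply div_le_div_of_nonneg_left (by positivity) (by positivity)
      exact mul_le_mul_of_nonneg_left hy3 hsa0.le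
    refine e1.trans ?_
    have e2 : 2*(K₁ + A^2/(4*Real.sqrt a^2))/(Real.sqrt a * (n:ℝ)^2) = KE/(n:ℝ)^2 := by
      rw [hKE, hsa]; field_simp
    rw [e2]
    exact div_le_div_of_nonneg_right (le_max_left _ _) hn2.le
  · rw [← hy, ← hB]
    refine hbF.trans ?_
    have e1 : 2*(K₁ + B^2/(4*Real.sqrt b^2))/(Real.sqrt b * y^3)
        ≤ 2*(K₁ + B^2/(4*Real.sqrt b^2))/(Real.sqrt b * (n:ℝ)^2) := by
      apply div_le_div_of_nonneg_left (by positivity) (by positivity)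
      exact mul_le_mul_of_nonneg_left hy3 hsb0.le
    refine e1.trans ?_
    have e2 : 2*(K₁ + B^2/(4*Real.sqrt b^2))/(Real.sqrt b * (n:ℝ)^2) = KF/(n:ℝ)^2 := by
      rw [hKF, hsb]; field_simp
    rw [e2]
    exact div_le_div_of_nonneg_right (le_max_right _ _) hn2.le

lemma mu_close_all (a b c : ℝ) (ha : 0 < a) (hb : 0 < b) (hc : 0 < c) (hne : a ≠ b) :
    ∃ K : ℝ, 0 < K ∧ ∃ N : ℕ, 1 ≤ N ∧ ∀ n : ℕ, N ≤ n →
      |muE a b c (((n:ℝ)*Real.pi)^2) - (Real.sqrt a * ((n:ℝ)*Real.pi)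
          + (c*a/(a-b))/(2*(Real.sqrt a * ((n:ℝ)*Real.pi))))| ≤ K/(n:ℝ)^2 ∧
      |muF a b c (((n:ℝ)*Real.pi)^2) - (Real.sqrt b * ((n:ℝ)*Real.pi)
          + (-(c*b)/(a-b))/(2*(Real.sqrt b * ((n:ℝ)*Real.pi))))| ≤ K/(n:ℝ)^2 := by
  rcases lt_or_gt_of_ne hne with h | h
  · obtain ⟨K, hK, N, hN1, hmain⟩ := mu_close b a c ha h hc
    refine ⟨K, hK, N, hN1, fun n hn => ?_⟩
    obtain ⟨h1, h2⟩ := hmain n hn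
    constructor
    · rw [muE_swap, show c*a/(a-b) = -(c*a)/(b-a) by rw [show a-b = -(b-a) by ring, div_neg, neg_div]]; exact h2
    · rw [muF_swap, show -(c*b)/(a-b) = c*b/(b-a) by rw [show a-b = -(b-a) by ring, div_neg, neg_div, neg_neg]]; exact h1
  · exact mu_close a b c hb h hc
lemma abs3 (x1 x2 x3 : ℝ) : |x1 - x2 + x3| ≤ |x1| + |x2| + |x3| := by
  calc |x1 - x2 + x3| ≤ |x1 - x2| + |x3| := abs_add_le _ _
    _ ≤ |x1| + |x2| + |x3| := by linarith [abs_sub x1 x2]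

lemma abs5 (x1 x2 x3 x4 x5 : ℝ) :
    |x1 - x2 + x3 - x4 + x5| ≤ |x1| + |x2| + |x3| + |x4| + |x5| := by
  calc |x1 - x2 + x3 - x4 + x5| ≤ |x1 - x2 + x3 - x4| + |x5| := abs_add_le _ _
    _ ≤ |x1 - x2 + x3| + |x4| + |x5| := by linarith [abs_sub (x1 - x2 + x3) x4]
    _ ≤ |x1| + |x2| + |x3| + |x4| + |x5| := by linarith [abs3 x1 x2 x3]

set_option maxHeartbeats 1000000 in
/-- Closeness of the two eigenfrequency branches in the different wave speed case when
`k₁ρ₂/(k₂ρ₁) = p₀²/q₀²` for positive integers `p₀, q₀`. -/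
theorem stmt_15 (ρ₁ ρ₂ k₁ k₂ : ℝ) (hρ₁ : 0 < ρ₁) (hρ₂ : 0 < ρ₂) (hk₁ : 0 < k₁) (hk₂ : 0 < k₂)
    (hne : k₁ / ρ₁ ≠ k₂ / ρ₂) (hA1 : condA1 ρ₁ ρ₂ k₁ k₂)
    (p₀ q₀ : ℕ) (hp₀ : 0 < p₀) (hq₀ : 0 < q₀)
    (hsq : k₁ * ρ₂ / (k₂ * ρ₁) = (p₀ : ℝ) ^ 2 / (q₀ : ℝ) ^ 2) :
    (∃ c₁ : ℝ, 0 < c₁ ∧ ∃ N₀ : ℕ, ∀ m n : ℕ, N₀ ≤ m → N₀ ≤ n →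
      c₁ / (m : ℝ) ≤ |mu1df ρ₁ ρ₂ k₁ k₂ m - mu2df ρ₁ ρ₂ k₁ k₂ n| ∧
      c₁ / (n : ℝ) ≤ |mu1df ρ₁ ρ₂ k₁ k₂ m - mu2df ρ₁ ρ₂ k₁ k₂ n|) ∧
    ∃ c₂ : ℝ, 0 < c₂ ∧ ∀ N : ℕ, ∃ m n : ℕ, N ≤ m ∧ N ≤ n ∧
      |mu1df ρ₁ ρ₂ k₁ k₂ m - mu2df ρ₁ ρ₂ k₁ k₂ n| ≤ c₂ / (m : ℝ) ∧
      |mu1df ρ₁ ρ₂ k₁ k₂ m - mu2df ρ₁ ρ₂ k₁ k₂ n| ≤ c₂ / (n : ℝ) := by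
  clear hA1
  have hpi0 : (0:ℝ) < Real.pi := Real.pi_pos
  have hpi1 : (1:ℝ) ≤ Real.pi := by linarith only [Real.pi_gt_three]
  obtain ⟨a, hadef⟩ : ∃ a : ℝ, a = k₁/ρ₁ := ⟨_, rfl⟩
  obtain ⟨b, hbdef⟩ : ∃ b : ℝ, b = k₂/ρ₂ := ⟨_, rfl⟩
  obtain ⟨c, hcdef⟩ : ∃ c : ℝ, c = k₁/ρ₂ := ⟨_, rfl⟩
  have ha : 0 < a := by rw [hadef]; positivity
  have hb : 0 < b := by rw [hbdef]; positivity
  have hc : 0 < c := by rw [hcdef]; positivity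
  have hne' : a ≠ b := by rw [hadef, hbdef]; exact hne
  have hrw1 : ∀ m : ℕ, mu1df ρ₁ ρ₂ k₁ k₂ m = muE a b c (((m:ℝ)*Real.pi)^2) := by
    intro m; rw [mu1df_eq, hadef, hbdef, hcdef]
  have hrw2 : ∀ m : ℕ, mu2df ρ₁ ρ₂ k₁ k₂ m = muF a b c (((m:ℝ)*Real.pi)^2) := by
    intro m; rw [mu2df_eq, hadef, hbdef, hcdef]
  have hp0R : (0:ℝ) < (p₀:ℝ) := by exact_mod_cast hp₀
  have hq0R : (0:ℝ) < (q₀:ℝ) := by exact_mod_cast hq₀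
  have hp1R : (1:ℝ) ≤ (p₀:ℝ) := by exact_mod_cast hp₀
  have hq1R : (1:ℝ) ≤ (q₀:ℝ) := by exact_mod_cast hq₀
  have hab2 : a*(q₀:ℝ)^2 = b*(p₀:ℝ)^2 := by
    have e1 : a/b = k₁*ρ₂/(k₂*ρ₁) := by
      rw [hadef, hbdef]; field_simp
    have e2 : a/b = (p₀:ℝ)^2/(q₀:ℝ)^2 := by rw [e1, hsq]
    have e3 := (div_eq_div_iff hb.ne' (by positivity : ((q₀:ℝ)^2) ≠ 0)).mp e2
    linarith only [e3]
  have hsa0 : 0 < Real.sqrt a := Real.sqrt_pos.mpr ha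
  have hsb0 : 0 < Real.sqrt b := Real.sqrt_pos.mpr hb
  have hsab : Real.sqrt a * (q₀:ℝ) = Real.sqrt b * (p₀:ℝ) := by
    have h1 : Real.sqrt (a*(q₀:ℝ)^2) = Real.sqrt (b*(p₀:ℝ)^2) := by rw [hab2]
    rwa [Real.sqrt_mul ha.le, Real.sqrt_mul hb.le, Real.sqrt_sq hq0R.le,
      Real.sqrt_sq hp0R.le] at h1
  obtain ⟨K, hK, N₁, hN₁1, hmain⟩ := mu_close_all a b c ha hb hc hne'
  obtain ⟨A, hA⟩ : ∃ A : ℝ, A = c*a/(a-b) := ⟨_, rfl⟩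
  obtain ⟨B, hB⟩ : ∃ B : ℝ, B = -(c*b)/(a-b) := ⟨_, rfl⟩
  simp only [← hA, ← hB] at hmain
  have hab0 : a - b ≠ 0 := sub_ne_zero.mpr hne'
  have hABne : A - B ≠ 0 := by
    rw [hA, hB, div_sub_div_same]
    exact div_ne_zero
      (ne_of_gt (by linarith only [mul_pos hc ha, mul_pos hc hb])) hab0
  obtain ⟨D, hD⟩ : ∃ D : ℝ, D = (A-B)/(2*Real.sqrt a*Real.pi) := ⟨_, rfl⟩
  have hD0 : D ≠ 0 := by rw [hD]; exact div_ne_zero hABne (by positivity)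
  have hDpos : 0 < |D| := abs_pos.mpr hD0
  obtain ⟨CA, hCA⟩ : ∃ CA : ℝ, CA = |A|/(2*Real.sqrt a*Real.pi) := ⟨_, rfl⟩
  obtain ⟨CB, hCB⟩ : ∃ CB : ℝ, CB = |B|/(2*Real.sqrt b*Real.pi) := ⟨_, rfl⟩
  have hCA0 : 0 ≤ CA := by rw [hCA]; positivity
  have hCB0 : 0 ≤ CB := by rw [hCB]; positivity
  obtain ⟨C₃, hC₃⟩ : ∃ C₃ : ℝ, C₃ = CA + CB + K := ⟨_, rfl⟩
  have hC₃0 : 0 < C₃ := by rw [hC₃]; linarith only [hCA0, hCB0, hK]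
  obtain ⟨G, hGdef⟩ : ∃ G : ℝ, G = Real.pi*Real.sqrt b/(q₀:ℝ) := ⟨_, rfl⟩
  have hG : 0 < G := by rw [hGdef]; positivity
  have habs1 : ∀ m:ℕ, (0:ℝ) < m → |A/(2*(Real.sqrt a*((m:ℝ)*Real.pi)))| = CA/(m:ℝ) := by
    intro m hm
    rw [show A/(2*(Real.sqrt a*((m:ℝ)*Real.pi))) = (A/(2*Real.sqrt a*Real.pi))/(m:ℝ) by
        rw [div_div]; congr 1; ring,
      abs_div, abs_div, abs_of_pos hm,
      abs_of_pos (show (0:ℝ) < 2*Real.sqrt a*Real.pi by positivity), hCA]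
  have habs2 : ∀ m:ℕ, (0:ℝ) < m → |B/(2*(Real.sqrt b*((m:ℝ)*Real.pi)))| = CB/(m:ℝ) := by
    intro m hm
    rw [show B/(2*(Real.sqrt b*((m:ℝ)*Real.pi))) = (B/(2*Real.sqrt b*Real.pi))/(m:ℝ) by
        rw [div_div]; congr 1; ring,
      abs_div, abs_div, abs_of_pos hm,
      abs_of_pos (show (0:ℝ) < 2*Real.sqrt b*Real.pi by positivity), hCB]
  have hres : ∀ m n : ℕ, (0:ℝ) < m → (0:ℝ) < n → (p₀:ℝ)*m = (q₀:ℝ)*n →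
      (Real.sqrt a*((m:ℝ)*Real.pi) + A/(2*(Real.sqrt a*((m:ℝ)*Real.pi))))
        - (Real.sqrt b*((n:ℝ)*Real.pi) + B/(2*(Real.sqrt b*((n:ℝ)*Real.pi)))) = D/(m:ℝ) := by
    intro m n hm hn hmn
    have hbn : Real.sqrt b*(n:ℝ) = Real.sqrt a*(m:ℝ) := by
      have h1 : Real.sqrt b*(n:ℝ)*(q₀:ℝ) = Real.sqrt a*(m:ℝ)*(q₀:ℝ) := by
        linear_combination (-(m:ℝ))*hsab - Real.sqrt b * hmn
      exact mul_right_cancel₀ hq0R.ne' h1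
    rw [show Real.sqrt b*((n:ℝ)*Real.pi) = Real.sqrt b*(n:ℝ)*Real.pi by ring, hbn, hD]
    field_simp
    ring
  have hnonres : ∀ m n : ℕ, p₀*m ≠ q₀*n →
      G ≤ |Real.sqrt a*((m:ℝ)*Real.pi) - Real.sqrt b*((n:ℝ)*Real.pi)| := by
    intro m n hmn
    have hint : (1:ℝ) ≤ |(p₀:ℝ)*m - (q₀:ℝ)*n| := by
      have h2 : (1:ℤ) ≤ |((p₀*m:ℕ):ℤ) - ((q₀*n:ℕ):ℤ)| := by
        have h1 : ((p₀*m:ℕ):ℤ) ≠ ((q₀*n:ℕ):ℤ) := by exact_mod_cast hmn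
        exact Int.one_le_abs (sub_ne_zero.mpr h1)
      have h3 : (1:ℝ) ≤ |((p₀*m:ℕ):ℝ) - ((q₀*n:ℕ):ℝ)| := by exact_mod_cast h2
      push_cast at h3
      exact h3
    have heq : Real.sqrt a*((m:ℝ)*Real.pi) - Real.sqrt b*((n:ℝ)*Real.pi)
        = (Real.pi*Real.sqrt b/(q₀:ℝ))*((p₀:ℝ)*m - (q₀:ℝ)*n) := by
      rw [div_mul_eq_mul_div, eq_div_iff hq0R.ne']
      linear_combination (Real.pi*(m:ℝ))*hsab
    rw [heq, abs_mul, abs_of_pos (show 0 < Real.pi*Real.sqrt b/(q₀:ℝ) by positivity), hGdef]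
    exact le_mul_of_one_le_right (by positivity) hint
  obtain ⟨N₂, hN₂⟩ := exists_nat_ge (max (4*C₃/G) (2*K*(1+(q₀:ℝ)^2)/|D|))
  obtain ⟨N₀, hN₀def⟩ : ∃ N₀ : ℕ, N₀ = max N₁ (max N₂ 1) := ⟨_, rfl⟩
  have hN₀facts : ∀ m : ℕ, N₀ ≤ m → (1:ℝ) ≤ (m:ℝ) ∧ (N₂:ℝ) ≤ (m:ℝ) ∧ N₁ ≤ m := by
    intro m hm
    rw [hN₀def] at hm
    refine ⟨?_, ?_, le_trans (le_max_left _ _) hm⟩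
    · exact_mod_cast le_trans (le_trans (le_max_right _ _) (le_max_right _ _)) hm
    · exact_mod_cast le_trans (le_trans (le_max_left _ _) (le_max_right _ _)) hm
  have hcore : ∀ m n : ℕ, N₀ ≤ m → N₀ ≤ n → p₀*m = q₀*n →
      |D|/(2*(m:ℝ)) ≤ |muE a b c (((m:ℝ)*Real.pi)^2) - muF a b c (((n:ℝ)*Real.pi)^2)| ∧
      |muE a b c (((m:ℝ)*Real.pi)^2) - muF a b c (((n:ℝ)*Real.pi)^2)| ≤ 3*|D|/(2*(m:ℝ)) := by
    intro m n hm hn hmn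
    obtain ⟨hm1, hmN2, hmN1⟩ := hN₀facts m hm
    obtain ⟨hn1, hnN2, hnN1⟩ := hN₀facts n hn
    have hm0 : (0:ℝ) < m := by linarith only [hm1]
    have hn0 : (0:ℝ) < n := by linarith only [hn1]
    have hmnR : (p₀:ℝ)*m = (q₀:ℝ)*n := by exact_mod_cast hmn
    have h1 := (hmain m hmN1).1
    have h2 := (hmain n hnN1).2
    have hgd := hres m n hm0 hn0 hmnR
    have hmqn : (m:ℝ) ≤ (q₀:ℝ)*n := by
      linarith only [hmnR, mul_nonneg (show (0:ℝ) ≤ (p₀:ℝ)-1 by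
        linarith only [hp1R]) hm0.le]
    have hsq2 : (m:ℝ)^2 ≤ ((q₀:ℝ)*n)^2 := by
      have := mul_self_le_mul_self hm0.le hmqn
      linarith only [this]
    have hKn : K/(n:ℝ)^2 ≤ K*(q₀:ℝ)^2/(m:ℝ)^2 := by
      rw [div_le_div_iff₀ (by positivity) (by positivity)]
      have := mul_le_mul_of_nonneg_left hsq2 hK.le
      linarith only [this]
    have hDm : 2*K*(1+(q₀:ℝ)^2) ≤ |D| * (m:ℝ) := by
      have h := (div_le_iff₀ hDpos).mp (le_trans (le_trans (le_max_right _ _) hN₂) hmN2)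
      linarith only [h]
    have herr : K/(m:ℝ)^2 + K/(n:ℝ)^2 ≤ |D|/(2*(m:ℝ)) := by
      have h3 : K/(m:ℝ)^2 + K*(q₀:ℝ)^2/(m:ℝ)^2 ≤ |D|/(2*(m:ℝ)) := by
        rw [← add_div, div_le_div_iff₀ (by positivity) (by positivity)]
        have := mul_le_mul_of_nonneg_right hDm hm0.le
        linarith only [this]
      linarith only [h3, hKn]
    have hDabs : |D/(m:ℝ)| = |D|/(m:ℝ) := by rw [abs_div, abs_of_pos hm0]
    obtain ⟨u, hu⟩ : ∃ u : ℝ, u = muE a b c (((m:ℝ)*Real.pi)^2) := ⟨_, rfl⟩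
    obtain ⟨v, hv⟩ : ∃ v : ℝ, v = muF a b c (((n:ℝ)*Real.pi)^2) := ⟨_, rfl⟩
    rw [← hu] at h1
    rw [← hv] at h2
    rw [← hu, ← hv]
    obtain ⟨g1, hg1⟩ : ∃ g1 : ℝ, g1 = Real.sqrt a*((m:ℝ)*Real.pi)
        + A/(2*(Real.sqrt a*((m:ℝ)*Real.pi))) := ⟨_, rfl⟩
    obtain ⟨g2, hg2⟩ : ∃ g2 : ℝ, g2 = Real.sqrt b*((n:ℝ)*Real.pi)
        + B/(2*(Real.sqrt b*((n:ℝ)*Real.pi))) := ⟨_, rfl⟩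
    rw [← hg1] at h1
    rw [← hg2] at h2
    rw [← hg1, ← hg2] at hgd
    constructor
    · have e : g1 - g2 = (u - v) - (u - g1) + (v - g2) := by ring
      have htri : |g1 - g2| ≤ |u - v| + |u - g1| + |v - g2| := by
        rw [e]; exact abs3 _ _ _
      rw [hgd, hDabs] at htri
      have hsplit : |D|/(2*(m:ℝ)) + |D|/(2*(m:ℝ)) = |D|/(m:ℝ) := by
        rw [← add_div, show |D| + |D| = 2*|D| by ring,
          mul_div_mul_left _ _ (two_ne_zero)]
      linarith only [htri, h1, h2, herr, hsplit]
    · have e : u - v = (g1 - g2) - (v - g2) + (u - g1) := by ring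
      have htri : |u - v| ≤ |g1 - g2| + |v - g2| + |u - g1| := by
        rw [e]; exact abs3 _ _ _
      rw [hgd, hDabs] at htri
      have hsplit : |D|/(2*(m:ℝ)) + |D|/(2*(m:ℝ)) = |D|/(m:ℝ) := by
        rw [← add_div, show |D| + |D| = 2*|D| by ring,
          mul_div_mul_left _ _ (two_ne_zero)]
      have h3 : 3*|D|/(2*(m:ℝ)) = |D|/(m:ℝ) + |D|/(2*(m:ℝ)) := by
        rw [← hsplit]; ring
      linarith only [htri, h1, h2, herr, h3]
  constructor
  · obtain ⟨cc, hccdef⟩ : ∃ cc : ℝ, cc = min (G/2) (|D|/(2*(q₀:ℝ))) := ⟨_, rfl⟩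
    have hcc : 0 < cc := by rw [hccdef]; positivity
    refine ⟨cc, hcc, N₀, fun m n hm hn => ?_⟩
    obtain ⟨hm1, hmN2, hmN1⟩ := hN₀facts m hm
    obtain ⟨hn1, hnN2, hnN1⟩ := hN₀facts n hn
    have hm0 : (0:ℝ) < m := by linarith only [hm1]
    have hn0 : (0:ℝ) < n := by linarith only [hn1]
    rw [hrw1 m, hrw2 n]
    by_cases hcase : p₀*m = q₀*n
    · have hmnR : (p₀:ℝ)*m = (q₀:ℝ)*n := by exact_mod_cast hcase
      have hlow := (hcore m n hm hn hcase).1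
      have hccD : cc ≤ |D|/2 := by
        rw [hccdef]
        refine le_trans (min_le_right _ _) ?_
        apply div_le_div_of_nonneg_left hDpos.le (by norm_num)
        linarith only [hq1R]
      have hmqn : (m:ℝ) ≤ (q₀:ℝ)*n := by
        linarith only [hmnR, mul_nonneg (show (0:ℝ) ≤ (p₀:ℝ)-1 by
          linarith only [hp1R]) hm0.le]
      have hcq : cc*(2*(q₀:ℝ)) ≤ |D| := by
        have h := min_le_right (G/2) (|D|/(2*(q₀:ℝ)))
        rw [← hccdef, le_div_iff₀ (show (0:ℝ) < 2*(q₀:ℝ) by positivity)] at h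
        exact h
      constructor
      · refine le_trans ?_ hlow
        rw [div_le_div_iff₀ hm0 (by positivity)]
        linarith only [mul_nonneg (show (0:ℝ) ≤ |D| - 2*cc by
          linarith only [hccD]) hm0.le]
      · refine le_trans ?_ hlow
        rw [div_le_div_iff₀ hn0 (by positivity)]
        linarith only [mul_le_mul_of_nonneg_left hmqn
            (show (0:ℝ) ≤ 2*cc by linarith only [hcc]),
          mul_le_mul_of_nonneg_right hcq hn0.le]
    · have hgap := hnonres m n hcase
      have h1 := (hmain m hmN1).1
      have h2 := (hmain n hnN1).2
      have hKm2 : K/(m:ℝ)^2 ≤ K/(m:ℝ) :=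
        div_le_div_of_nonneg_left hK.le hm0 (le_self_pow₀ hm1 two_ne_zero)
      have hKn2 : K/(n:ℝ)^2 ≤ K/(n:ℝ) :=
        div_le_div_of_nonneg_left hK.le hn0 (le_self_pow₀ hn1 two_ne_zero)
      have hquarterm : C₃/(m:ℝ) ≤ G/4 := by
        have hxb : 4*C₃/G ≤ (m:ℝ) := le_trans (le_trans (le_max_left _ _) hN₂) hmN2
        rw [div_le_div_iff₀ hm0 (by norm_num : (0:ℝ) < 4)]
        have h := (div_le_iff₀ hG).mp hxb
        linarith only [h]
      have hquartern : C₃/(n:ℝ) ≤ G/4 := by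
        have hxb : 4*C₃/G ≤ (n:ℝ) := le_trans (le_trans (le_max_left _ _) hN₂) hnN2
        rw [div_le_div_iff₀ hn0 (by norm_num : (0:ℝ) < 4)]
        have h := (div_le_iff₀ hG).mp hxb
        linarith only [h]
      obtain ⟨u, hu⟩ : ∃ u : ℝ, u = muE a b c (((m:ℝ)*Real.pi)^2) := ⟨_, rfl⟩
      obtain ⟨v, hv⟩ : ∃ v : ℝ, v = muF a b c (((n:ℝ)*Real.pi)^2) := ⟨_, rfl⟩
      rw [← hu] at h1
      rw [← hv] at h2
      rw [← hu, ← hv]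
      have e : Real.sqrt a*((m:ℝ)*Real.pi) - Real.sqrt b*((n:ℝ)*Real.pi)
          = (u - v) - (u - (Real.sqrt a*((m:ℝ)*Real.pi)
              + A/(2*(Real.sqrt a*((m:ℝ)*Real.pi)))))
            + (v - (Real.sqrt b*((n:ℝ)*Real.pi)
              + B/(2*(Real.sqrt b*((n:ℝ)*Real.pi)))))
            - A/(2*(Real.sqrt a*((m:ℝ)*Real.pi)))
            + B/(2*(Real.sqrt b*((n:ℝ)*Real.pi))) := by ring
      have htri := abs5 (u - v)
        (u - (Real.sqrt a*((m:ℝ)*Real.pi) + A/(2*(Real.sqrt a*((m:ℝ)*Real.pi)))))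
        (v - (Real.sqrt b*((n:ℝ)*Real.pi) + B/(2*(Real.sqrt b*((n:ℝ)*Real.pi)))))
        (A/(2*(Real.sqrt a*((m:ℝ)*Real.pi))))
        (B/(2*(Real.sqrt b*((n:ℝ)*Real.pi))))
      rw [← e] at htri
      rw [habs1 m hm0, habs2 n hn0] at htri
      have hCAm : CA/(m:ℝ) + K/(m:ℝ) ≤ C₃/(m:ℝ) := by
        rw [hC₃, add_div, add_div]
        have hpos : (0:ℝ) ≤ CB/(m:ℝ) := by positivity
        linarith only [hpos]
      have hCBn : CB/(n:ℝ) + K/(n:ℝ) ≤ C₃/(n:ℝ) := by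
        rw [hC₃, add_div, add_div]
        have hpos : (0:ℝ) ≤ CA/(n:ℝ) := by positivity
        linarith only [hpos]
      have hmainbound : G/2 ≤ |u - v| := by
        linarith only [htri, hgap, h1, h2, hKm2, hKn2, hCAm, hCBn,
          hquarterm, hquartern]
      constructor
      · refine le_trans ?_ hmainbound
        refine le_trans (div_le_self hcc.le hm1) ?_
        rw [hccdef]; exact min_le_left _ _
      · refine le_trans ?_ hmainbound
        refine le_trans (div_le_self hcc.le hn1) ?_
        rw [hccdef]; exact min_le_left _ _
  · obtain ⟨c₂, hc₂def⟩ : ∃ c₂ : ℝ, c₂ = 2*|D| * ((p₀:ℝ)+(q₀:ℝ)) := ⟨_, rfl⟩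
    have hc₂ : 0 < c₂ := by rw [hc₂def]; positivity
    refine ⟨c₂, hc₂, fun N => ?_⟩
    obtain ⟨t, htdef⟩ : ∃ t : ℕ, t = max (max N N₀) 1 := ⟨_, rfl⟩
    have ht1 : 1 ≤ t := by rw [htdef]; exact le_max_right _ _
    have htN : N ≤ t := by rw [htdef]; exact le_trans (le_max_left _ _) (le_max_left _ _)
    have htN₀ : N₀ ≤ t := by rw [htdef]; exact le_trans (le_max_right _ _) (le_max_left _ _)
    refine ⟨q₀*t, p₀*t, le_trans htN (Nat.le_mul_of_pos_left t hq₀),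
      le_trans htN (Nat.le_mul_of_pos_left t hp₀), ?_⟩
    have hmN₀ : N₀ ≤ q₀*t := le_trans htN₀ (Nat.le_mul_of_pos_left t hq₀)
    have hnN₀ : N₀ ≤ p₀*t := le_trans htN₀ (Nat.le_mul_of_pos_left t hp₀)
    have hres' : p₀*(q₀*t) = q₀*(p₀*t) := by ring
    have hup := (hcore (q₀*t) (p₀*t) hmN₀ hnN₀ hres').2
    have hm1 := (hN₀facts _ hmN₀).1
    have hn1 := (hN₀facts _ hnN₀).1
    have hm0 : (0:ℝ) < ((q₀*t:ℕ):ℝ) := by linarith only [hm1]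
    have hn0 : (0:ℝ) < ((p₀*t:ℕ):ℝ) := by linarith only [hn1]
    have ht0R : (1:ℝ) ≤ (t:ℝ) := by exact_mod_cast ht1
    rw [hrw1, hrw2]
    constructor
    · refine le_trans hup ?_
      rw [hc₂def, div_le_div_iff₀ (by positivity) hm0]
      push_cast
      have key : (0:ℝ) ≤ |D| * ((q₀:ℝ)*(t:ℝ))*(4*((p₀:ℝ)+(q₀:ℝ))-3) :=
        mul_nonneg (mul_nonneg hDpos.le (by positivity))
          (by linarith only [hp1R, hq1R])
      linarith only [key]
    · refine le_trans hup ?_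
      rw [hc₂def, div_le_div_iff₀ (by positivity) hn0]
      push_cast
      have hpq1 : (0:ℝ) ≤ ((p₀:ℝ)-1)*((q₀:ℝ)-1) :=
        mul_nonneg (by linarith only [hp1R]) (by linarith only [hq1R])
      have hq₀sq : (0:ℝ) ≤ (q₀:ℝ)*(q₀:ℝ) := mul_nonneg hq0R.le hq0R.le
      have key : (0:ℝ) ≤ |D| * (t:ℝ)*(4*((p₀:ℝ)+(q₀:ℝ))*(q₀:ℝ)-3*(p₀:ℝ)) :=
        mul_nonneg (mul_nonneg hDpos.le (by positivity))
          (by linarith only [hp1R, hq1R, hpq1, hq₀sq])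
      linarith only [key]
end

section
/- Let ρ₁, ρ₂, k₁, k₂ be positive real constants with k₁/ρ₁ ≠ k₂/ρ₂, and for each positive integer n let μ_{1,n} and μ_{2,n} be defined by the different-speed formulas. Then there exists γ > 0 such that for each j ∈ {1, 2} and all positive integers m ≠ n one has |μ_{j,m} − μ_{j,n}| ≥ 2γ; consequently, whenever |μ_{j,m} − μ_{l,n}| ≤ 2γ with (j, m) ≠ (l, n), one must have j ≠ l. -/
set_option maxHeartbeats 1000000


/-- Both eigenfrequency branches, indexed by `j : Fin 2`. -/
noncomputable def muDf (ρ₁ ρ₂ k₁ k₂ : ℝ) (j : Fin 2) (n : ℕ) : ℝ :=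
  if j = 0 then mu1df ρ₁ ρ₂ k₁ k₂ n else mu2df ρ₁ ρ₂ k₁ k₂ n


namespace Stmt17Aux

noncomputable def qf (a b c x : ℝ) : ℝ := (a-b)^2*x^2 + 2*((a+b)*c)*x + c^2
noncomputable def fP (a b c x : ℝ) : ℝ := ((a+b)*x + c + Real.sqrt (qf a b c x))/2
noncomputable def fM (a b c x : ℝ) : ℝ := ((a+b)*x + c - Real.sqrt (qf a b c x))/2

lemma qf_nonneg {a b c : ℝ} (hc : 0 < c) (hab : 0 < a + b) {x : ℝ} (hx : 0 ≤ x) :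
    0 ≤ qf a b c x := by
  unfold qf
  have h1 : 0 ≤ (a-b)^2*x^2 := by positivity
  have h2 : 0 ≤ 2*((a+b)*c)*x := by positivity
  nlinarith [sq_nonneg c]

lemma qf_mono {a b c : ℝ} (hc : 0 < c) (hab : 0 < a + b) {x y : ℝ} (hx : 0 ≤ x)
    (hxy : x ≤ y) : qf a b c x ≤ qf a b c y := by
  unfold qf
  have h1 : x^2 ≤ y^2 := by nlinarith
  nlinarith [mul_nonneg (sq_nonneg (a-b)) (sub_nonneg.mpr h1), mul_pos hab hc]

lemma qf_pos {a b c : ℝ} (hc : 0 < c) (hab : 0 < a + b) {x : ℝ} (hx : 0 ≤ x) :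
    0 < qf a b c x := by
  unfold qf
  have h1 : 0 ≤ (a-b)^2*x^2 := by positivity
  have h2 : 0 ≤ 2*((a+b)*c)*x := by positivity
  nlinarith [sq_nonneg c]

/-- √A − √B ≥ t given the product inequality. -/
lemma sqrt_sub_ge {A B t : ℝ} (hB : 0 ≤ B) (hBA : B ≤ A) (hA : 0 < A)
    (h : t * (Real.sqrt A + Real.sqrt B) ≤ A - B) : t ≤ Real.sqrt A - Real.sqrt B := by
  have hsa := Real.sq_sqrt (le_of_lt hA)
  have hsb := Real.sq_sqrt hB
  have hsa0 : 0 < Real.sqrt A := Real.sqrt_pos.mpr hA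
  have hsb0 : 0 ≤ Real.sqrt B := Real.sqrt_nonneg B
  nlinarith [hsa, hsb, hsa0, hsb0, h]

lemma my_sqrt_add {u v : ℝ} (hu : 0 ≤ u) (hv : 0 ≤ v) :
    Real.sqrt (u+v) ≤ Real.sqrt u + Real.sqrt v := by
  have hle : u + v ≤ (Real.sqrt u + Real.sqrt v)^2 := by
    nlinarith [Real.sq_sqrt hu, Real.sq_sqrt hv,
      mul_nonneg (Real.sqrt_nonneg u) (Real.sqrt_nonneg v)]
  have h := Real.sqrt_le_sqrt hle
  rwa [Real.sqrt_sq (by positivity)] at h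

/-- monotonicity of √q(y)/((a−b)²y + (a+b)c). -/
lemma l2a {a b c : ℝ} (ha : 0 < a) (hb : 0 < b) (hc : 0 < c) {p y : ℝ}
    (hp : 0 < p) (hpy : p ≤ y) :
    ((a-b)^2*y + (a+b)*c) * Real.sqrt (qf a b c p)
      ≤ ((a-b)^2*p + (a+b)*c) * Real.sqrt (qf a b c y) := by
  have hab : 0 < a + b := by linarith
  have hy : 0 < y := lt_of_lt_of_le hp hpy
  set u := Real.sqrt (qf a b c p) with hu
  set v := Real.sqrt (qf a b c y) with hv
  have hu2 : u^2 = qf a b c p := Real.sq_sqrt (qf_nonneg hc hab hp.le)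
  have hv2 : v^2 = qf a b c y := Real.sq_sqrt (qf_nonneg hc hab hy.le)
  have hu0 : 0 ≤ u := Real.sqrt_nonneg _
  have hv0 : 0 ≤ v := Real.sqrt_nonneg _
  have hqle : qf a b c p ≤ qf a b c y := qf_mono hc hab hp.le hpy
  have hX : 0 < (a-b)^2*y + (a+b)*c := by positivity
  have hY : 0 < (a-b)^2*p + (a+b)*c := by positivity
  have hid : ((a-b)^2*p + (a+b)*c)^2 * (qf a b c y) - ((a-b)^2*y + (a+b)*c)^2 * (qf a b c p)
      = (4*(a*b)*c^2) * (qf a b c y - qf a b c p) := by unfold qf; ring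
  have h1 : (((a-b)^2*y + (a+b)*c) * u)^2 ≤ (((a-b)^2*p + (a+b)*c) * v)^2 := by
    have hk : 0 ≤ (4*(a*b)*c^2) * (qf a b c y - qf a b c p) := mul_nonneg (by positivity) (by linarith)
    nlinarith [hu2, hv2, hid, hk]
  nlinarith [h1, mul_nonneg hX.le hu0, mul_nonneg hY.le hv0]

/-- concavity-style bound: (√q(x') − √q(x))·√q(p) ≤ ((a−b)²p+(a+b)c)(x'−x). -/
lemma l2 {a b c : ℝ} (ha : 0 < a) (hb : 0 < b) (hc : 0 < c) {p x x' : ℝ}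
    (hp : 0 < p) (hpx : p ≤ x) (hxx : x ≤ x') :
    (Real.sqrt (qf a b c x') - Real.sqrt (qf a b c x)) * Real.sqrt (qf a b c p)
      ≤ ((a-b)^2*p + (a+b)*c) * (x' - x) := by
  have hab : 0 < a + b := by linarith
  have hx : 0 < x := lt_of_lt_of_le hp hpx
  have hx' : 0 < x' := lt_of_lt_of_le hx hxx
  set u := Real.sqrt (qf a b c x) with hud
  set u' := Real.sqrt (qf a b c x') with hu'd
  set w := Real.sqrt (qf a b c p) with hwd
  set Y := (a-b)^2*p + (a+b)*c with hYd
  have hu2 : u^2 = qf a b c x := Real.sq_sqrt (qf_nonneg hc hab hx.le)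
  have hu'2 : u'^2 = qf a b c x' := Real.sq_sqrt (qf_nonneg hc hab hx'.le)
  have hu0 : 0 < u := Real.sqrt_pos.mpr (qf_pos hc hab hx.le)
  have hu'0 : 0 < u' := Real.sqrt_pos.mpr (qf_pos hc hab hx'.le)
  have hw0 : 0 ≤ w := Real.sqrt_nonneg _
  have hΔ : 0 ≤ x' - x := by linarith
  have hax : ((a-b)^2*x + (a+b)*c) * w ≤ Y * u := l2a ha hb hc hp hpx
  have hax' : ((a-b)^2*x' + (a+b)*c) * w ≤ Y * u' := l2a ha hb hc hp (le_trans hpx hxx)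
  have hdiff : u'^2 - u^2 = ((a-b)^2*(x+x') + 2*((a+b)*c))*(x'-x) := by
    rw [hu'2, hu2]; unfold qf; ring
  have k1 : 0 ≤ (x'-x) * (Y*u - ((a-b)^2*x + (a+b)*c)*w) := mul_nonneg hΔ (by linarith)
  have k2 : 0 ≤ (x'-x) * (Y*u' - ((a-b)^2*x' + (a+b)*c)*w) := mul_nonneg hΔ (by linarith)
  have key : ((u'-u)*w - Y*(x'-x)) * (u+u') ≤ 0 := by nlinarith [k1, k2, hdiff]
  nlinarith [key, hu0, hu'0]


lemma sqrtq_le_S {a b c : ℝ} (ha : 0 < a) (hb : 0 < b) (hc : 0 < c) {x : ℝ} (hx : 0 ≤ x) :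
    Real.sqrt (qf a b c x) ≤ (a+b)*x + c := by
  have hab : 0 < a + b := by linarith
  have h1 : qf a b c x ≤ ((a+b)*x + c)^2 := by
    unfold qf; nlinarith [mul_nonneg (mul_nonneg ha.le hb.le) (sq_nonneg x)]
  have h2 := Real.sqrt_le_sqrt h1
  rwa [Real.sqrt_sq (by positivity)] at h2

lemma fM_nonneg {a b c : ℝ} (ha : 0 < a) (hb : 0 < b) (hc : 0 < c) {x : ℝ} (hx : 0 ≤ x) :
    0 ≤ fM a b c x := by
  have := sqrtq_le_S ha hb hc hx (x := x)
  unfold fM; linarith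

lemma fM_le_fP {a b c x : ℝ} : fM a b c x ≤ fP a b c x := by
  have := Real.sqrt_nonneg (qf a b c x)
  unfold fM fP; linarith

lemma fP_le_S {a b c : ℝ} (ha : 0 < a) (hb : 0 < b) (hc : 0 < c) {x : ℝ} (hx : 0 ≤ x) :
    fP a b c x ≤ (a+b)*x + c := by
  have := sqrtq_le_S ha hb hc hx (x := x)
  unfold fP; linarith

lemma fP_inc {a b c : ℝ} (ha : 0 < a) (hb : 0 < b) (hc : 0 < c) {x x' : ℝ}
    (hx : 0 ≤ x) (hxx : x ≤ x') :
    (a+b)/2*(x'-x) ≤ fP a b c x' - fP a b c x := by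
  have hab : 0 < a + b := by linarith
  have hu : Real.sqrt (qf a b c x) ≤ Real.sqrt (qf a b c x') :=
    Real.sqrt_le_sqrt (qf_mono hc hab hx hxx)
  unfold fP; linarith

lemma E_pos {a b c : ℝ} (ha : 0 < a) (hb : 0 < b) (hc : 0 < c) {p : ℝ} (hp : 0 < p) :
    0 < (a+b)*Real.sqrt (qf a b c p) - ((a-b)^2*p + (a+b)*c) := by
  have hab : 0 < a + b := by linarith
  set w := Real.sqrt (qf a b c p) with hw
  have hw2 : w^2 = qf a b c p := Real.sq_sqrt (qf_nonneg hc hab hp.le)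
  have hw0 : 0 ≤ w := Real.sqrt_nonneg _
  have hY : 0 < (a-b)^2*p + (a+b)*c := by positivity
  have hid : (a+b)^2*(qf a b c p) - ((a-b)^2*p + (a+b)*c)^2
      = 4*(a*b)*((a-b)^2*p^2 + 2*((a+b)*c)*p) := by unfold qf; ring
  have hpos : 0 < (a-b)^2*p^2 + 2*((a+b)*c)*p := by positivity
  nlinarith [hw2, hid, hpos, mul_pos ha hb, mul_nonneg hab.le hw0]

lemma fM_inc {a b c : ℝ} (ha : 0 < a) (hb : 0 < b) (hc : 0 < c) {p x x' : ℝ}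
    (hp : 0 < p) (hpx : p ≤ x) (hxx : x ≤ x') :
    ((a+b)*Real.sqrt (qf a b c p) - ((a-b)^2*p + (a+b)*c))/(2*Real.sqrt (qf a b c p))*(x'-x)
      ≤ fM a b c x' - fM a b c x := by
  have hab : 0 < a + b := by linarith
  set w := Real.sqrt (qf a b c p) with hwd
  have hw0 : 0 < w := Real.sqrt_pos.mpr (qf_pos hc hab hp.le)
  have hl2 := l2 ha hb hc hp hpx hxx
  rw [div_mul_eq_mul_div, div_le_iff₀ (by positivity)]
  unfold fM
  nlinarith [hl2]

lemma gap_assemble {K c₀ : ℝ} (f : ℕ → ℝ) (hK : 0 < K) (hc₀ : 0 < c₀)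
    (hub : ∀ n : ℕ, 1 ≤ n → Real.sqrt (f n) ≤ K * n)
    (h0 : ∀ n : ℕ, 1 ≤ n → 0 ≤ f n)
    (hinc : ∀ m n : ℕ, 1 ≤ n → n ≤ m → c₀ * ((m:ℝ)^2 - (n:ℝ)^2) ≤ f m - f n) :
    ∀ m n : ℕ, 1 ≤ n → n < m → c₀ / K ≤ Real.sqrt (f m) - Real.sqrt (f n) := by
  intro m n hn hnm
  have hm : 1 ≤ m := le_trans hn hnm.le
  have hn1 : (1:ℝ) ≤ (n:ℝ) := by exact_mod_cast hn
  have hnm1 : (n:ℝ) + 1 ≤ (m:ℝ) := by exact_mod_cast hnm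
  have hsq : (n:ℝ)^2 < (m:ℝ)^2 := by nlinarith
  have hB : 0 ≤ f n := h0 n hn
  have hincs := hinc m n hn hnm.le
  have hBA : f n ≤ f m := by nlinarith [mul_pos hc₀ (sub_pos.mpr hsq)]
  have hA : 0 < f m := by nlinarith [mul_pos hc₀ (sub_pos.mpr hsq)]
  apply sqrt_sub_ge hB hBA hA
  have hubm := hub m hm
  have hubn := hub n hn
  have hfac : c₀*((m:ℝ)+n) ≤ c₀*((m:ℝ)^2 - (n:ℝ)^2) := by
    have h1 : (m:ℝ)+n ≤ (m:ℝ)^2 - (n:ℝ)^2 := by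
      nlinarith [mul_nonneg (show (0:ℝ) ≤ (m:ℝ)+n by positivity)
        (show (0:ℝ) ≤ (m:ℝ)-(n:ℝ)-1 by linarith)]
    exact mul_le_mul_of_nonneg_left h1 hc₀.le
  have ht0 : 0 < c₀/K := by positivity
  calc c₀/K * (Real.sqrt (f m) + Real.sqrt (f n)) ≤ c₀/K * (K*m + K*n) := by
        apply mul_le_mul_of_nonneg_left (by linarith) ht0.le
    _ = c₀*((m:ℝ)+n) := by field_simp
    _ ≤ c₀*((m:ℝ)^2 - (n:ℝ)^2) := hfac
    _ ≤ f m - f n := hincs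

lemma gap_main {a b c : ℝ} (ha : 0 < a) (hb : 0 < b) (hc : 0 < c) :
    ∃ δ : ℝ, 0 < δ ∧
      (∀ m n : ℕ, 1 ≤ n → n < m →
        δ ≤ Real.sqrt (fP a b c (((m:ℝ)*Real.pi)^2))
            - Real.sqrt (fP a b c (((n:ℝ)*Real.pi)^2))) ∧
      (∀ m n : ℕ, 1 ≤ n → n < m →
        δ ≤ Real.sqrt (fM a b c (((m:ℝ)*Real.pi)^2))
            - Real.sqrt (fM a b c (((n:ℝ)*Real.pi)^2))) := by
  have hab : 0 < a + b := by linarith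
  have hπ := Real.pi_pos
  set p := Real.pi^2 with hpd
  have hp : 0 < p := by positivity
  set w := Real.sqrt (qf a b c p) with hwd
  have hw0 : 0 < w := Real.sqrt_pos.mpr (qf_pos hc hab hp.le)
  set E := (a+b)*w - ((a-b)^2*p + (a+b)*c) with hEd
  have hE : 0 < E := E_pos ha hb hc hp
  set K := Real.sqrt (a+b)*Real.pi + Real.sqrt c with hKd
  have hK : 0 < K := by
    have := Real.sqrt_pos.mpr hab
    positivity
  set c₁ := (a+b)/2 * p with hc₁d
  set c₂ := E/(2*w) * p with hc₂d
  have hc₁ : 0 < c₁ := by positivity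
  have hc₂ : 0 < c₂ := by positivity
  -- common facts about x_n
  have hxval : ∀ n : ℕ, 1 ≤ n → p ≤ ((n:ℝ)*Real.pi)^2 := by
    intro n hn
    have hn1 : (1:ℝ) ≤ (n:ℝ) := by exact_mod_cast hn
    rw [hpd]
    nlinarith [mul_nonneg (show (0:ℝ) ≤ (n:ℝ)^2-1 by nlinarith) (sq_nonneg Real.pi)]
  have hx0 : ∀ n : ℕ, (0:ℝ) ≤ ((n:ℝ)*Real.pi)^2 := fun n => sq_nonneg _
  have hxdiff : ∀ m n : ℕ, ((m:ℝ)*Real.pi)^2 - ((n:ℝ)*Real.pi)^2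
      = ((m:ℝ)^2 - (n:ℝ)^2)*p := by intro m n; rw [hpd]; ring
  have hxmono : ∀ m n : ℕ, n ≤ m → ((n:ℝ)*Real.pi)^2 ≤ ((m:ℝ)*Real.pi)^2 := by
    intro m n h
    have : (n:ℝ) ≤ (m:ℝ) := by exact_mod_cast h
    have hn0 : (0:ℝ) ≤ (n:ℝ) := Nat.cast_nonneg n
    nlinarith [mul_nonneg (show (0:ℝ) ≤ (m:ℝ)^2-(n:ℝ)^2 by nlinarith) (sq_nonneg Real.pi)]
  have hub : ∀ (g : ℝ → ℝ), (∀ x, 0 ≤ x → g x ≤ (a+b)*x + c) → (∀ x, 0 ≤ x → 0 ≤ g x) →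
      ∀ n : ℕ, 1 ≤ n → Real.sqrt (g (((n:ℝ)*Real.pi)^2)) ≤ K * n := by
    intro g hgle hg0 n hn
    have hn1 : (1:ℝ) ≤ (n:ℝ) := by exact_mod_cast hn
    have h1 : Real.sqrt (g (((n:ℝ)*Real.pi)^2))
        ≤ Real.sqrt ((a+b)*((n:ℝ)*Real.pi)^2 + c) :=
      Real.sqrt_le_sqrt (hgle _ (hx0 n))
    have h2 : Real.sqrt ((a+b)*((n:ℝ)*Real.pi)^2 + c)
        ≤ Real.sqrt ((a+b)*((n:ℝ)*Real.pi)^2) + Real.sqrt c :=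
      my_sqrt_add (by positivity) hc.le
    have h3 : Real.sqrt ((a+b)*((n:ℝ)*Real.pi)^2)
        = Real.sqrt (a+b) * ((n:ℝ)*Real.pi) := by
      rw [Real.sqrt_mul hab.le, Real.sqrt_sq (by positivity)]
    have h4 : Real.sqrt (a+b) * ((n:ℝ)*Real.pi) + Real.sqrt c ≤ K * n := by
      rw [hKd]
      have hsc : 0 ≤ Real.sqrt c := Real.sqrt_nonneg c
      have hsab : 0 ≤ Real.sqrt (a+b) := Real.sqrt_nonneg _
      nlinarith
    linarith
  have hubP : ∀ n : ℕ, 1 ≤ n → Real.sqrt (fP a b c (((n:ℝ)*Real.pi)^2)) ≤ K * n :=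
    hub _ (fun x hx => fP_le_S ha hb hc hx)
      (fun x hx => le_trans (fM_nonneg ha hb hc hx) fM_le_fP)
  have hubM : ∀ n : ℕ, 1 ≤ n → Real.sqrt (fM a b c (((n:ℝ)*Real.pi)^2)) ≤ K * n :=
    hub _ (fun x hx => le_trans fM_le_fP (fP_le_S ha hb hc hx))
      (fun x hx => fM_nonneg ha hb hc hx)
  have hincP : ∀ m n : ℕ, 1 ≤ n → n ≤ m →
      c₁ * ((m:ℝ)^2 - (n:ℝ)^2)
        ≤ fP a b c (((m:ℝ)*Real.pi)^2) - fP a b c (((n:ℝ)*Real.pi)^2) := by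
    intro m n hn hnm
    have h := fP_inc ha hb hc (le_trans hp.le (hxval n hn)) (hxmono m n hnm)
    calc c₁ * ((m:ℝ)^2 - (n:ℝ)^2)
        = (a+b)/2 * ((((m:ℝ)*Real.pi)^2 - ((n:ℝ)*Real.pi)^2)) := by
          rw [hxdiff, hc₁d]; ring
      _ ≤ _ := h
  have hincM : ∀ m n : ℕ, 1 ≤ n → n ≤ m →
      c₂ * ((m:ℝ)^2 - (n:ℝ)^2)
        ≤ fM a b c (((m:ℝ)*Real.pi)^2) - fM a b c (((n:ℝ)*Real.pi)^2) := by
    intro m n hn hnm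
    have h := fM_inc ha hb hc hp (hxval n hn) (hxmono m n hnm)
    calc c₂ * ((m:ℝ)^2 - (n:ℝ)^2)
        = E/(2*w) * ((((m:ℝ)*Real.pi)^2 - ((n:ℝ)*Real.pi)^2)) := by
          rw [hxdiff, hc₂d]; ring
      _ ≤ _ := h
  have hgP := gap_assemble (fun n : ℕ => fP a b c (((n:ℝ)*Real.pi)^2)) hK hc₁ hubP
      (fun n _ => le_trans (fM_nonneg ha hb hc (hx0 n)) fM_le_fP) hincP
  have hgM := gap_assemble (fun n : ℕ => fM a b c (((n:ℝ)*Real.pi)^2)) hK hc₂ hubM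
      (fun n _ => fM_nonneg ha hb hc (hx0 n)) hincM
  exact ⟨min (c₁/K) (c₂/K), lt_min (by positivity) (by positivity),
    fun m n hn hnm => le_trans (min_le_left _ _) (hgP m n hn hnm),
    fun m n hn hnm => le_trans (min_le_right _ _) (hgM m n hn hnm)⟩


lemma inner_sqrt {a b c : ℝ} (hab : 0 < a + b) (hc : 0 < c) (hne : a ≠ b) (y : ℝ) :
    ((a - b) / 2) * Real.sqrt (y ^ 4 + (2 * (a + b) * c * y ^ 2 + c ^ 2) / (a - b) ^ 2)
      = (a - b)/(2*|a - b|) * Real.sqrt (qf a b c (y^2)) := by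
  have hne0 : a - b ≠ 0 := sub_ne_zero.mpr hne
  have h1 : y ^ 4 + (2 * (a + b) * c * y ^ 2 + c ^ 2) / (a - b) ^ 2
      = qf a b c (y^2) / (a - b)^2 := by
    unfold qf; field_simp; ring
  rw [h1, Real.sqrt_div (qf_nonneg hc hab (sq_nonneg y)), Real.sqrt_sq_eq_abs]
  have habs0 : |a - b| ≠ 0 := abs_ne_zero.mpr hne0
  field_simp

end Stmt17Aux

/-- Each eigenfrequency branch is uniformly `2γ`-separated in the different wave speed
case; consequently two eigenfrequencies within distance `2γ` lie on different branches. -/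
theorem stmt_17 (ρ₁ ρ₂ k₁ k₂ : ℝ) (hρ₁ : 0 < ρ₁) (hρ₂ : 0 < ρ₂) (hk₁ : 0 < k₁) (hk₂ : 0 < k₂)
    (hne : k₁ / ρ₁ ≠ k₂ / ρ₂) :
    ∃ γ : ℝ, 0 < γ ∧
      (∀ j : Fin 2, ∀ m n : ℕ, 0 < m → 0 < n → m ≠ n →
        2 * γ ≤ |muDf ρ₁ ρ₂ k₁ k₂ j m - muDf ρ₁ ρ₂ k₁ k₂ j n|) ∧
      ∀ j l : Fin 2, ∀ m n : ℕ, 0 < m → 0 < n → (j, m) ≠ (l, n) →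
        |muDf ρ₁ ρ₂ k₁ k₂ j m - muDf ρ₁ ρ₂ k₁ k₂ l n| ≤ 2 * γ → j ≠ l := by
  have ha : 0 < k₁/ρ₁ := div_pos hk₁ hρ₁
  have hb : 0 < k₂/ρ₂ := div_pos hk₂ hρ₂
  have hc : 0 < k₁/ρ₂ := div_pos hk₁ hρ₂
  have hab : 0 < k₁/ρ₁ + k₂/ρ₂ := by linarith
  have hne0 : k₁/ρ₁ - k₂/ρ₂ ≠ 0 := sub_ne_zero.mpr hne
  obtain ⟨δ, hδ, hgP, hgM⟩ := Stmt17Aux.gap_main ha hb hc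
  have hcoef : (k₁/ρ₁ - k₂/ρ₂)/(2*(k₁/ρ₁ - k₂/ρ₂)) = 1/2 := by
    rw [mul_comm, ← div_div, div_self hne0]
  have hcoefneg : (k₁/ρ₁ - k₂/ρ₂)/(2*(-(k₁/ρ₁ - k₂/ρ₂))) = -(1/2) := by
    rw [mul_neg, div_neg, mul_comm, ← div_div, div_self hne0]
  have m0 : ∀ n : ℕ, muDf ρ₁ ρ₂ k₁ k₂ 0 n = mu1df ρ₁ ρ₂ k₁ k₂ n := fun n => if_pos rfl
  have m1 : ∀ n : ℕ, muDf ρ₁ ρ₂ k₁ k₂ 1 n = mu2df ρ₁ ρ₂ k₁ k₂ n :=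
    fun n => if_neg (by decide)
  have e1 : ∀ n : ℕ, mu1df ρ₁ ρ₂ k₁ k₂ n
      = Real.sqrt (((k₁ / ρ₁ + k₂ / ρ₂) * ((n : ℝ) * Real.pi) ^ 2 + k₁ / ρ₂) / 2
        + (k₁/ρ₁ - k₂/ρ₂)/(2*|k₁/ρ₁ - k₂/ρ₂|)
          * Real.sqrt (Stmt17Aux.qf (k₁/ρ₁) (k₂/ρ₂) (k₁/ρ₂) (((n:ℝ)*Real.pi)^2))) := by
    intro n
    unfold mu1df
    rw [Stmt17Aux.inner_sqrt hab hc hne ((n:ℝ)*Real.pi)]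
  have e2 : ∀ n : ℕ, mu2df ρ₁ ρ₂ k₁ k₂ n
      = Real.sqrt (((k₁ / ρ₁ + k₂ / ρ₂) * ((n : ℝ) * Real.pi) ^ 2 + k₁ / ρ₂) / 2
        - (k₁/ρ₁ - k₂/ρ₂)/(2*|k₁/ρ₁ - k₂/ρ₂|)
          * Real.sqrt (Stmt17Aux.qf (k₁/ρ₁) (k₂/ρ₂) (k₁/ρ₂) (((n:ℝ)*Real.pi)^2))) := by
    intro n
    unfold mu2df
    rw [Stmt17Aux.inner_sqrt hab hc hne ((n:ℝ)*Real.pi)]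
  have key : ∀ j : Fin 2, ∀ m n : ℕ, 1 ≤ n → n < m →
      δ ≤ muDf ρ₁ ρ₂ k₁ k₂ j m - muDf ρ₁ ρ₂ k₁ k₂ j n := by
    rcases lt_or_gt_of_ne hne with hlt | hgt
    · -- k₁/ρ₁ < k₂/ρ₂ : mu1df is the fM branch, mu2df the fP branch
      have habs : |k₁/ρ₁ - k₂/ρ₂| = -(k₁/ρ₁ - k₂/ρ₂) := abs_of_neg (by linarith)
      have efM : ∀ n : ℕ, mu1df ρ₁ ρ₂ k₁ k₂ n
          = Real.sqrt (Stmt17Aux.fM (k₁/ρ₁) (k₂/ρ₂) (k₁/ρ₂) (((n:ℝ)*Real.pi)^2)) := by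
        intro n
        rw [e1 n, habs, hcoefneg]
        congr 1
        unfold Stmt17Aux.fM
        ring
      have efP : ∀ n : ℕ, mu2df ρ₁ ρ₂ k₁ k₂ n
          = Real.sqrt (Stmt17Aux.fP (k₁/ρ₁) (k₂/ρ₂) (k₁/ρ₂) (((n:ℝ)*Real.pi)^2)) := by
        intro n
        rw [e2 n, habs, hcoefneg]
        congr 1
        unfold Stmt17Aux.fP
        ring
      intro j m n hn hnm
      fin_cases j
      · show δ ≤ muDf ρ₁ ρ₂ k₁ k₂ 0 m - muDf ρ₁ ρ₂ k₁ k₂ 0 n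
        rw [m0, m0, efM, efM]; exact hgM m n hn hnm
      · show δ ≤ muDf ρ₁ ρ₂ k₁ k₂ 1 m - muDf ρ₁ ρ₂ k₁ k₂ 1 n
        rw [m1, m1, efP, efP]; exact hgP m n hn hnm
    · -- k₂/ρ₂ < k₁/ρ₁ : mu1df is the fP branch, mu2df the fM branch
      have habs : |k₁/ρ₁ - k₂/ρ₂| = k₁/ρ₁ - k₂/ρ₂ := abs_of_pos (by linarith)
      have efP : ∀ n : ℕ, mu1df ρ₁ ρ₂ k₁ k₂ n
          = Real.sqrt (Stmt17Aux.fP (k₁/ρ₁) (k₂/ρ₂) (k₁/ρ₂) (((n:ℝ)*Real.pi)^2)) := by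
        intro n
        rw [e1 n, habs, hcoef]
        congr 1
        unfold Stmt17Aux.fP
        ring
      have efM : ∀ n : ℕ, mu2df ρ₁ ρ₂ k₁ k₂ n
          = Real.sqrt (Stmt17Aux.fM (k₁/ρ₁) (k₂/ρ₂) (k₁/ρ₂) (((n:ℝ)*Real.pi)^2)) := by
        intro n
        rw [e2 n, habs, hcoef]
        congr 1
        unfold Stmt17Aux.fM
        ring
      intro j m n hn hnm
      fin_cases j
      · show δ ≤ muDf ρ₁ ρ₂ k₁ k₂ 0 m - muDf ρ₁ ρ₂ k₁ k₂ 0 n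
        rw [m0, m0, efP, efP]; exact hgP m n hn hnm
      · show δ ≤ muDf ρ₁ ρ₂ k₁ k₂ 1 m - muDf ρ₁ ρ₂ k₁ k₂ 1 n
        rw [m1, m1, efM, efM]; exact hgM m n hn hnm
  have habs : ∀ j : Fin 2, ∀ m n : ℕ, 0 < m → 0 < n → m ≠ n →
      δ ≤ |muDf ρ₁ ρ₂ k₁ k₂ j m - muDf ρ₁ ρ₂ k₁ k₂ j n| := by
    intro j m n hm hn hmn
    rcases lt_or_gt_of_ne hmn with h | h
    · have := key j n m hm h
      rw [abs_sub_comm, abs_of_nonneg (by linarith)]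
      linarith
    · have := key j m n hn h
      rw [abs_of_nonneg (by linarith)]
      linarith
  refine ⟨δ/4, by positivity, ?_, ?_⟩
  · intro j m n hm hn hmn
    have := habs j m n hm hn hmn
    linarith
  · intro j l m n hm hn hpair hle hjl
    subst hjl
    have hmn : m ≠ n := fun h => hpair (by rw [h])
    have := habs j m n hm hn hmn
    linarith
end
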